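/- Let c ∈ ℂ, R = ℂ[t, t^{-1}, u | u² = t⁴ − 2ct² + 1], and let σ be the ℂ-algebra automorphism of R with σ(t) = t^{-1}, σ(u) = t^{-2}u. The ℂ-linear map induced by σ on Ω¹_R/dR (sending the class of f dg to the class of σ(f) d(σ(g))) satisfies: σ(ω₀) = −ω₀, σ(ω_{−1}) = −ω_{−3}, σ(ω_{−2}) = −ω_{−2}, σ(ω_{−3}) = −ω_{−1}, and σ(ω_{−4}) = −ω_{−4}. -/

import Mathlib

/-! The substitution `t ↦ t⁻¹`, `u ↦ t⁻²u` sends `t^k u dt` to `-t^(-k-4) u dt`, so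
`σ(ω_k) = -ω_(-k-4)`, and similarly `σ(ω₀) = -ω₀`. This gives every claim except the last, where
`σ(ω₋₄) = -ω₀`; there one needs `ω₀ = ω₋₄`, which holds because differentiating
`u² = t⁴ - 2ct² + 1` gives `u du = (2t³ - 2ct) dt`, whence `d(t⁻³u³) = 3(u - t⁻⁴u) dt`. -/

noncomputable section
open Polynomial LaurentPolynomial

/-- The ring `R = ℂ[t,t⁻¹][u]/(u² − (t⁴ − 2ct² + 1))`, realized by adjoining a root `u`
of `X² − (t⁴ − 2ct² + 1)` to the ring of Laurent polynomials `ℂ[t,t⁻¹]`. -/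
abbrev DJKM (c : ℂ) : Type :=
  AdjoinRoot ((X : Polynomial (LaurentPolynomial ℂ)) ^ 2 -
    Polynomial.C (T 4 - 2 * LaurentPolynomial.C c * T 2 + 1))

/-- The element `t^i` of `R`, for `i : ℤ`. -/
def tp (c : ℂ) (i : ℤ) : DJKM c := AdjoinRoot.of _ (T i)

/-- The element `u` of `R`. -/
def uu (c : ℂ) : DJKM c := AdjoinRoot.root _

/-- The subspace `dR ⊆ Ω¹_R` of exact differentials. -/
def dR (c : ℂ) : Submodule ℂ (KaehlerDifferential ℂ (DJKM c)) :=
  LinearMap.range (KaehlerDifferential.D ℂ (DJKM c)).toLinearMap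

/-- The class of `f·dg` in `Ω¹_R/dR`. -/
def cls (c : ℂ) (f g : DJKM c) : KaehlerDifferential ℂ (DJKM c) ⧸ dR c :=
  Submodule.Quotient.mk (f • KaehlerDifferential.D ℂ (DJKM c) g)

/-- `ω_k` : the class of `t^k·u·dt` in `Ω¹_R/dR`. -/
def w (c : ℂ) (k : ℤ) : KaehlerDifferential ℂ (DJKM c) ⧸ dR c :=
  cls c (tp c k * uu c) (tp c 1)

/-- `ω₀` : the class of `t⁻¹·dt` in `Ω¹_R/dR`. -/
def w0 (c : ℂ) : KaehlerDifferential ℂ (DJKM c) ⧸ dR c :=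
  cls c (tp c (-1)) (tp c 1)

theorem Derivation.leibniz_units_zpow {R A M : Type*} [CommSemiring R] [CommSemiring A]
    [Algebra R A] [AddCommGroup M] [Module A M] [Module R M] (D : Derivation R A M) (x : Aˣ)
    (n : ℤ) :
    D ↑(x ^ n) = n • (↑(x ^ (n - 1)) : A) • D x := by
  have step (m : ℤ) : D ↑(x ^ (m + 1)) = (x : A) • D ↑(x ^ m) + (↑(x ^ m) : A) • D x := by
    rw [zpow_add_one, Units.val_mul, D.leibniz, add_comm]
  induction n using Int.induction_on with
  | zero => simp
  | succ n ih =>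
    rw [step, ih, smul_comm, smul_smul, ← Units.val_mul, ← zpow_one_add, add_sub_cancel,
      add_sub_cancel_right, add_smul, one_smul]
  | pred n ih =>
    set m : ℤ := -(n : ℤ) - 1
    have h := step m
    rw [sub_add_cancel, ih] at h
    have hx : x⁻¹ • (↑(x ^ m) : A) • D x = (↑(x ^ (m - 1)) : A) • D x := by
      rw [Units.smul_def, smul_smul, ← Units.val_mul, ← zpow_neg_one, ← zpow_add, neg_add_eq_sub]
    calc D ↑(x ^ m) = x⁻¹ • (x : A) • D ↑(x ^ m) := by
          rw [← Units.smul_def, inv_smul_smul]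
      _ = x⁻¹ • ((-n : ℤ) • (↑(x ^ m) : A) • D x - (↑(x ^ m) : A) • D x) := by
          rw [h, add_sub_cancel_right]
      _ = (m : ℤ) • (↑(x ^ (m - 1)) : A) • D x := by
          rw [smul_sub, smul_comm, hx, sub_smul (-(n : ℤ)), one_smul]

section

variable {c : ℂ}

local notation "D" => KaehlerDifferential.D ℂ (DJKM c)

lemma tp_add (i j : ℤ) : tp c (i + j) = tp c i * tp c j := by
  rw [tp, tp, tp, T_add, map_mul]

variable (c) in
lemma tp_mul_tp (i j k : ℤ) (h : i + j = k := by ring) : tp c i * tp c j = tp c k := by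
  rw [← h, tp_add]

variable (c) in
lemma tp_zero : tp c 0 = 1 := by
  rw [tp, T_zero, map_one]

variable (c) in
def tUnit : (DJKM c)ˣ where
  val := tp c 1
  inv := tp c (-1)
  val_inv := by rw [← tp_add, add_neg_cancel, tp_zero]
  inv_val := by rw [← tp_add, neg_add_cancel, tp_zero]

lemma tp_eq_val_tUnit_zpow (n : ℤ) : tp c n = ↑(tUnit c ^ n) := by
  induction n using Int.induction_on with
  | zero => rw [zpow_zero, Units.val_one, tp_zero]
  | succ n ih => rw [tp_add, ih, zpow_add_one, Units.val_mul]; rfl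
  | pred n ih => rw [sub_eq_add_neg, tp_add, ih, zpow_add, zpow_neg_one, Units.val_mul]; rfl

lemma map_tp {F : Type*} [FunLike F (DJKM c) (DJKM c)] [MonoidHomClass F (DJKM c) (DJKM c)]
    (σ : F) (hσ : σ (tp c 1) = tp c (-1)) (n : ℤ) : σ (tp c n) = tp c (-n) := by
  have hunit : Units.map (σ : DJKM c →* DJKM c) (tUnit c) = (tUnit c)⁻¹ := Units.ext hσ
  rw [tp_eq_val_tUnit_zpow, tp_eq_val_tUnit_zpow, ← MonoidHom.coe_coe, ← Units.coe_map, map_zpow,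
    hunit, inv_zpow']

lemma D_tp (n : ℤ) : D (tp c n) = n • tp c (n - 1) • D (tp c 1) := by
  simp only [tp_eq_val_tUnit_zpow, zpow_one]
  exact (KaehlerDifferential.D ℂ (DJKM c)).leibniz_units_zpow _ n

lemma uu_sq : uu c ^ 2 = tp c 4 - (2 * c) • tp c 2 + 1 := by
  have h := AdjoinRoot.eval₂_root ((X : Polynomial (LaurentPolynomial ℂ)) ^ 2 -
    Polynomial.C (T 4 - 2 * LaurentPolynomial.C c * T 2 + 1))
  rw [eval₂_sub, eval₂_X_pow, Polynomial.eval₂_C, sub_eq_zero] at h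
  rw [uu, h, map_add, map_sub, map_mul, map_mul, map_one, map_ofNat, tp, tp, Algebra.smul_def,
    map_mul, map_ofNat, IsScalarTower.algebraMap_apply ℂ (LaurentPolynomial ℂ),
    ← LaurentPolynomial.C_eq_algebraMap, AdjoinRoot.algebraMap_eq]

lemma cls_tp (f : DJKM c) (n : ℤ) : cls c f (tp c n) = n • cls c (f * tp c (n - 1)) (tp c 1) := by
  rw [cls, cls, D_tp, smul_comm f n, smul_smul, Submodule.Quotient.mk_smul]

lemma cls_tp_neg_one (f : DJKM c) : cls c f (tp c (-1)) = -cls c (f * tp c (-2)) (tp c 1) := by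
  rw [cls_tp, neg_one_zsmul]
  rfl

lemma uu_smul_D_uu : uu c • D (uu c) = (2 * tp c 3 - (2 * c) • tp c 1) • D (tp c 1) := by
  refine smul_right_injective _ (two_ne_zero (α := ℂ)) ?_
  have hsq := (KaehlerDifferential.D ℂ (DJKM c)).leibniz_pow (uu c) 2
  rw [uu_sq] at hsq
  simp only [map_add, map_sub, Derivation.map_smul, Derivation.map_one_eq_zero, D_tp 4, D_tp 2]
    at hsq
  norm_num at hsq
  linear_combination (norm := match_scalars) -hsq <;>
    simp only [Algebra.smul_def, map_mul, map_ofNat] <;> ring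

lemma D_tp_neg_three_mul_uu_pow_three :
    D (tp c (-3) * uu c ^ 3) = (3 : ℂ) • ((uu c - tp c (-4) * uu c) • D (tp c 1)) := by
  rw [Derivation.leibniz, Derivation.leibniz_pow, D_tp, show uu c ^ (3 - 1) = uu c * uu c by ring,
    mul_smul, uu_smul_D_uu, show uu c ^ 3 = uu c * uu c ^ 2 by ring, uu_sq]
  norm_num only
  match_scalars
  simp only [Algebra.smul_def, map_mul, map_ofNat]
  linear_combination (6 * uu c) * tp_mul_tp c (-3) 3 0 - (3 * uu c) * tp_mul_tp c (-4) 4 0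
    - (6 * algebraMap ℂ (DJKM c) c * uu c) * tp_mul_tp c (-3) 1 (-2)
    + (6 * algebraMap ℂ (DJKM c) c * uu c) * tp_mul_tp c (-4) 2 (-2) + (3 * uu c) * tp_zero c

lemma w_zero_eq_w_neg_four : w c 0 = w c (-4) := by
  have h : (3 : ℂ) • (w c 0 - w c (-4)) = 0 := by
    rw [w, w, cls, cls, tp_zero, one_mul, ← Submodule.Quotient.mk_sub, ← Submodule.Quotient.mk_smul,
      ← sub_smul, ← D_tp_neg_three_mul_uu_pow_three, Submodule.Quotient.mk_eq_zero]
    exact ⟨_, rfl⟩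
  rwa [smul_eq_zero_iff_right three_ne_zero, sub_eq_zero] at h

end

/-- The `ℂ`-linear map induced on `Ω¹_R/dR` by the automorphism `σ` of `R` with
`σ(t) = t⁻¹`, `σ(u) = t⁻²u` (i.e. sending the class of `f·dg` to the class of `σ(f)·d(σ(g))`)
satisfies `σ(ω₀) = −ω₀`, `σ(ω₋₁) = −ω₋₃`, `σ(ω₋₂) = −ω₋₂`, `σ(ω₋₃) = −ω₋₁`, `σ(ω₋₄) = −ω₋₄`. -/
theorem stmt5 (c : ℂ) (σ : DJKM c ≃ₐ[ℂ] DJKM c)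
    (hσt : σ (tp c 1) = tp c (-1)) (hσu : σ (uu c) = tp c (-2) * uu c)
    (τ : (KaehlerDifferential ℂ (DJKM c) ⧸ dR c) →ₗ[ℂ] (KaehlerDifferential ℂ (DJKM c) ⧸ dR c))
    (hτ : ∀ f g : DJKM c, τ (cls c f g) = cls c (σ f) (σ g)) :
    τ (w0 c) = -w0 c ∧ τ (w c (-1)) = -w c (-3) ∧ τ (w c (-2)) = -w c (-2) ∧
      τ (w c (-3)) = -w c (-1) ∧ τ (w c (-4)) = -w c (-4) := by
  have hτw (k : ℤ) : τ (w c k) = -w c (-k - 4) := by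
    rw [w, hτ, map_mul, map_tp σ hσt, hσu, hσt, cls_tp_neg_one, w]
    congr 2
    linear_combination (uu c * tp c (-2)) * tp_mul_tp c (-k) (-2) (-k - 2) +
      uu c * tp_mul_tp c (-k - 2) (-2) (-k - 4)
  refine ⟨?_, ?_, ?_, ?_, ?_⟩
  · rw [w0, hτ, map_tp σ hσt, hσt, neg_neg, cls_tp_neg_one, tp_mul_tp c 1 (-2) (-1)]
  · rw [hτw]; norm_num
  · rw [hτw]; norm_num
  · rw [hτw]; norm_num
  · rw [hτw, ← w_zero_eq_w_neg_four]; norm_num
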